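/- Let M be a tame matroid (every circuit-cocircuit intersection is finite) such that every circuit meets every cocircuit in an even number of elements. Then for every base B of M and every circuit C of M, C equals the symmetric difference △_{e ∈ C \ B} C_e of the fundamental circuits C_e of the elements e ∈ C \ B with respect to B; in particular, each element of E lies in only finitely many of these fundamental circuits. -/

import Mathlib

open Set

namespace Matroid

variable {α : Type*}

/-- A circuit of a matroid is a minimal dependent set. -/
def Circuit (M : Matroid α) (C : Set α) : Prop :=
  M.Dep C ∧ ∀ D, M.Dep D → D ⊆ C → D = C

/-- A cocircuit is a circuit of the dual matroid. -/
def Cocircuit (M : Matroid α) (D : Set α) : Prop := M✶.Circuit D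

/-- The matroid obtained by deleting the set `D`. -/
def delete' (M : Matroid α) (D : Set α) : Matroid α := M ↾ (M.E \ D)

/-- The matroid obtained by contracting the set `C`. -/
def contract' (M : Matroid α) (C : Set α) : Matroid α := ((M✶).delete' C)✶

/-- `N` is a minor of `M` if it is obtained from `M` by contracting a set `C`
and deleting a set `D`, where `C` and `D` are disjoint subsets of the ground set. -/
def IsMinor' (N M : Matroid α) : Prop :=
  ∃ C D, Disjoint C D ∧ C ∪ D ⊆ M.E ∧ N = (M.contract' C).delete' D

/-- A scrawl is a union of circuits. -/
def Scrawl (M : Matroid α) (W : Set α) : Prop :=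
  ∃ S : Set (Set α), (∀ C ∈ S, M.Circuit C) ∧ W = ⋃₀ S

/-- A matroid is tame if every circuit-cocircuit intersection is finite. -/
def Tame (M : Matroid α) : Prop :=
  ∀ C D, M.Circuit C → M.Cocircuit D → (C ∩ D).Finite

/-- A `k`-painting of a matroid: nonzero coefficients on each circuit and each
cocircuit such that each circuit-cocircuit pair is "orthogonal". -/
def IsPainting {k : Type*} [Field k] (M : Matroid α)
    (c : Set α → α → k) (d : Set α → α → k) : Prop :=
  (∀ C, M.Circuit C → ∀ e ∈ C, c C e ≠ 0) ∧
  (∀ D, M.Cocircuit D → ∀ e ∈ D, d D e ≠ 0) ∧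
  (∀ C D, M.Circuit C → M.Cocircuit D →
    (C ∩ D).Finite ∧ ∑ᶠ e ∈ C ∩ D, c C e * d D e = 0)

end Matroid

/-!
Fix `f`. If `f ∉ B`, then `f` lies in no fundamental circuit `C_e` other than `C_f`. If `f ∈ B`,
let `D` be the fundamental cocircuit of `f`, so `D ∩ B = {f}`. Each `C_e` is forced to be the
fundamental circuit of `e`, so `f ∈ C_e` iff `e ∈ D`, and the `e ∈ C \ B` with `f ∈ C_e` are
exactly `(C ∩ D) \ {f}`. This set is finite by tameness, and
since `|C ∩ D|` is even it has odd size exactly when `f ∈ C`.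
-/

lemma Set.odd_ncard_sdiff_singleton_iff {α : Type*} {s : Set α} {a : α} (hs : s.Finite)
    (heven : Even s.ncard) : Odd (s \ {a}).ncard ↔ a ∈ s := by
  by_cases ha : a ∈ s
  · rw [ncard_sdiff_singleton_of_mem ha]
    have hpos : 1 ≤ s.ncard := Nat.one_le_iff_ne_zero.2 (ncard_ne_zero_of_mem ha hs)
    exact iff_of_true (Nat.Even.sub_odd hpos heven odd_one) ha
  · rw [sdiff_singleton_eq_self ha]
    exact iff_of_false (Nat.not_odd_iff_even.2 heven) ha

lemma Set.odd_ncard_inter_singleton_iff {α : Type*} {s : Set α} {a : α} :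
    Odd (s ∩ {a}).ncard ↔ a ∈ s := by
  by_cases ha : a ∈ s <;> simp [ha]

namespace Matroid

variable {α : Type*} {M : Matroid α} {B C D : Set α} {fc : α → Set α} {f : α}

lemma circuit_iff_isCircuit : M.Circuit C ↔ M.IsCircuit C := by
  rw [isCircuit_iff]
  rfl

lemma cocircuit_iff_isCocircuit : M.Cocircuit D ↔ M.IsCocircuit D :=
  circuit_iff_isCircuit

lemma setOf_mem_fundCircuit_eq_inter_singleton
    (hfc : ∀ e ∈ C \ B, e ∈ fc e ∧ fc e ⊆ insert e B) (hf : f ∉ B) :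
    {e | e ∈ C \ B ∧ f ∈ fc e} = C ∩ {f} := by
  ext e
  constructor
  · rintro ⟨he, hfe⟩
    obtain rfl | hfB := (hfc e he).2 hfe
    · exact ⟨he.1, rfl⟩
    · exact absurd hfB hf
  · rintro ⟨heC, rfl⟩
    exact ⟨⟨heC, hf⟩, (hfc e ⟨heC, hf⟩).1⟩

lemma setOf_mem_fundCircuit_eq_inter_fundCocircuit (hB : M.IsBase B)
    (hfc : ∀ e ∈ C \ B, M.IsCircuit (fc e) ∧ fc e ⊆ insert e B) (hf : f ∈ B) :
    {e | e ∈ C \ B ∧ f ∈ fc e} = (C ∩ M.fundCocircuit f B) \ {f} := by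
  have hfc_eq : ∀ e ∈ C \ B, fc e = M.fundCircuit e B := fun e he ↦
    (hfc e he).1.eq_fundCircuit_of_subset hB.indep (hfc e he).2
  ext e
  constructor
  · rintro ⟨he, hfe⟩
    rw [hfc_eq e he, ← hB.mem_fundCocircuit_iff_mem_fundCircuit] at hfe
    exact ⟨⟨he.1, hfe⟩, fun hef ↦ he.2 (hef ▸ hf)⟩
  · rintro ⟨⟨heC, heD⟩, hef⟩
    have heB : e ∉ B := fun heB ↦ hef (M.fundCocircuit_inter_eq hf ▸ ⟨heD, heB⟩)
    refine ⟨⟨heC, heB⟩, ?_⟩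
    rwa [hfc_eq e ⟨heC, heB⟩, ← hB.mem_fundCocircuit_iff_mem_fundCircuit]

end Matroid

open Matroid in
/-- In a tame matroid with all circuit-cocircuit intersections even, every circuit is the
symmetric difference of the fundamental circuits of its elements outside a base; in
particular each element lies in only finitely many of these fundamental circuits. -/
theorem stmt11 {α : Type*} (M : Matroid α) (htame : M.Tame)
    (heven : ∀ C D, M.Circuit C → M.Cocircuit D → Even (C ∩ D).ncard)
    (B : Set α) (hB : M.IsBase B) (C : Set α) (hC : M.Circuit C)
    (fc : α → Set α)
    (hfc : ∀ e ∈ C \ B, M.Circuit (fc e) ∧ e ∈ fc e ∧ fc e ⊆ insert e B) :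
    (∀ f, {e | e ∈ C \ B ∧ f ∈ fc e}.Finite) ∧
    C = {f | Odd {e | e ∈ C \ B ∧ f ∈ fc e}.ncard} := by
  suffices key : ∀ f, {e | e ∈ C \ B ∧ f ∈ fc e}.Finite ∧
      (Odd {e | e ∈ C \ B ∧ f ∈ fc e}.ncard ↔ f ∈ C) from
    ⟨fun f ↦ (key f).1, ext fun f ↦ (key f).2.symm⟩
  intro f
  by_cases hf : f ∈ B
  · have hD : M.Cocircuit (M.fundCocircuit f B) :=
      cocircuit_iff_isCocircuit.2 (fundCocircuit_isCocircuit hf hB)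
    have hCD := htame C _ hC hD
    rw [setOf_mem_fundCircuit_eq_inter_fundCocircuit hB
      (fun e he ↦ ⟨circuit_iff_isCircuit.1 (hfc e he).1, (hfc e he).2.2⟩) hf,
      odd_ncard_sdiff_singleton_iff hCD (heven C _ hC hD)]
    exact ⟨hCD.sdiff, and_iff_left (mem_fundCocircuit M f B)⟩
  · rw [setOf_mem_fundCircuit_eq_inter_singleton (fun e he ↦ (hfc e he).2) hf]
    exact ⟨(finite_singleton f).inter_of_right C, odd_ncard_inter_singleton_iff⟩
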